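/- arXiv:2510.15359 — 2 statements merged into one kernel-verified Lean document; each statement's English description precedes it below -/
import Mathlib

section
/- For m ∈ ℕ and p > 1, define V_p : ℝ^m → ℝ^m by V_p(z) = |z|^((p−2)/2)·z (with V_p(0)=0). Then there exists a constant c_V = c_V(m,p) > 0 such that for all z₁, z₂ ∈ ℝ^m not both zero, (1/c_V)·|z₁ − z₂| ≤ |V_p(z₁) − V_p(z₂)| / (|z₁| + |z₂|)^((p−2)/2) ≤ c_V·|z₁ − z₂|. -/
/-!
Put `β = p / 2`, so that `V_p z = ‖z‖ ^ (β - 1) • z`. For fixed norms `a = ‖x‖`, `b = ‖y‖`,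
both `‖V_p x - V_p y‖²` and `‖x - y‖²` are affine functions of `⟪x, y⟫`, which ranges over
`[-a b, a b]`. An inequality between affine functions that holds at both ends of an interval
holds on all of it, so it suffices to treat parallel and antiparallel vectors, where the claim
becomes the scalar comparisons `|a^β - b^β| ≍ |a - b| (a + b)^(β-1)` and
`a^β + b^β ≍ (a + b)^β`. These follow from Bernoulli's inequality and the monotonicity of
`t ↦ t^(β-1)` on `a ≤ a + b ≤ 2a`.
-/

open Real

section Scalar

variable {a b β : ℝ}

lemma rpow_sub_one_mul_self (hβ : β ≠ 0) (ha : 0 ≤ a) : a ^ (β - 1) * a = a ^ β := by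
  rcases ha.eq_or_lt with rfl | ha
  · simp [zero_rpow hβ]
  · rw [rpow_sub_one ha.ne']
    field_simp

lemma rpow_sub_rpow_le_rpow_sub_one_mul_sub (hβ₀ : 0 < β) (hβ₁ : β ≤ 1) (hb : 0 ≤ b)
    (hba : b ≤ a) : a ^ β - b ^ β ≤ a ^ (β - 1) * (a - b) := by
  have hcross : a ^ (β - 1) * b ≤ b ^ β := by
    rcases hb.eq_or_lt with rfl | hb
    · simp [zero_rpow hβ₀.ne']
    · rw [← rpow_sub_one_mul_self hβ₀.ne' hb.le]
      exact mul_le_mul_of_nonneg_right (rpow_le_rpow_of_nonpos hb hba (by linarith)) hb.le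
  have := rpow_sub_one_mul_self hβ₀.ne' (hb.trans hba)
  linarith

lemma rpow_sub_one_mul_sub_le_rpow_sub_rpow (hβ : 1 ≤ β) (hb : 0 ≤ b) (hba : b ≤ a) :
    a ^ (β - 1) * (a - b) ≤ a ^ β - b ^ β := by
  have hcross : b ^ β ≤ a ^ (β - 1) * b := by
    rw [← rpow_sub_one_mul_self (by linarith) hb]
    exact mul_le_mul_of_nonneg_right (rpow_le_rpow hb hba (by linarith)) hb
  have := rpow_sub_one_mul_self (β := β) (by linarith) (hb.trans hba)
  linarith

lemma rpow_mul_one_add_mul_div_sub_one (ha : 0 < a) :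
    a ^ β * (1 + β * (b / a - 1)) = a ^ β - β * (a ^ (β - 1) * (a - b)) := by
  rw [rpow_sub_one ha.ne']
  field_simp
  ring

lemma rpow_sub_rpow_le_mul_rpow_sub_one_mul_sub (hβ : 1 ≤ β) (ha : 0 < a) (hb : 0 ≤ b) :
    a ^ β - b ^ β ≤ β * (a ^ (β - 1) * (a - b)) := by
  have hbern := one_add_mul_self_le_rpow_one_add (s := b / a - 1) (by simp; positivity) hβ
  rw [add_sub_cancel, div_rpow hb ha.le, le_div_iff₀ (rpow_pos_of_pos ha β), mul_comm,
    rpow_mul_one_add_mul_div_sub_one ha] at hbern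
  linarith

lemma mul_rpow_sub_one_mul_sub_le_rpow_sub_rpow (hβ₀ : 0 ≤ β) (hβ₁ : β ≤ 1) (ha : 0 < a)
    (hb : 0 ≤ b) : β * (a ^ (β - 1) * (a - b)) ≤ a ^ β - b ^ β := by
  have hbern :=
    rpow_one_add_le_one_add_mul_self (s := b / a - 1) (by simp; positivity) hβ₀ hβ₁
  rw [add_sub_cancel, div_rpow hb ha.le, div_le_iff₀ (rpow_pos_of_pos ha β), mul_comm,
    rpow_mul_one_add_mul_div_sub_one ha] at hbern
  linarith

-- Dominates `2 ^ |β - 1|`, `2`, `2 ^ β` (from `a ≤ a + b ≤ 2 a`) and `β`, `β⁻¹` (from Bernoulli).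
noncomputable def bilipConst (β : ℝ) : ℝ := 2 ^ (β + 1) + β + β⁻¹

lemma le_bilipConst {t : ℝ} (hβ : 0 < β) (ht : t ≤ 2 ^ (β + 1) ∨ t ≤ β ∨ t ≤ β⁻¹) :
    t ≤ bilipConst β := by
  have : 0 < (2 : ℝ) ^ (β + 1) := by positivity
  have : 0 < β⁻¹ := by positivity
  unfold bilipConst
  rcases ht with ht | ht | ht <;> linarith

lemma two_rpow_le_bilipConst {e : ℝ} (hβ : 0 < β) (he : e ≤ β + 1) : 2 ^ e ≤ bilipConst β :=
  le_bilipConst hβ (.inl (rpow_le_rpow_of_exponent_le one_le_two he))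

lemma bilipConst_pos (hβ : 0 < β) : 0 < bilipConst β :=
  (rpow_pos_of_pos two_pos 0).trans_le (two_rpow_le_bilipConst hβ (by linarith))

lemma rpow_sub_rpow_le_bilipConst_mul_of_le (hβ : 0 < β) (hb : 0 ≤ b) (hba : b ≤ a) :
    a ^ β - b ^ β ≤ bilipConst β * ((a - b) * (a + b) ^ (β - 1)) := by
  rcases (hb.trans hba).eq_or_lt with rfl | ha
  · obtain rfl : b = 0 := le_antisymm hba hb
    simp
  have hS : 0 ≤ (a - b) * (a + b) ^ (β - 1) := mul_nonneg (by linarith) (by positivity)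
  rcases le_total β 1 with hβ₁ | hβ₁
  · have hsum : a ^ (β - 1) ≤ 2 ^ (1 - β) * (a + b) ^ (β - 1) := by
      have h2a : 2 ^ (β - 1) * a ^ (β - 1) ≤ (a + b) ^ (β - 1) := by
        rw [← mul_rpow zero_le_two ha.le]
        exact rpow_le_rpow_of_nonpos (by positivity) (by linarith) (by linarith)
      have h22 : (2 : ℝ) ^ (1 - β) * 2 ^ (β - 1) = 1 := by
        rw [← rpow_add two_pos]
        simp
      calc a ^ (β - 1) = 2 ^ (1 - β) * (2 ^ (β - 1) * a ^ (β - 1)) := by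
            rw [← mul_assoc, h22, one_mul]
        _ ≤ 2 ^ (1 - β) * (a + b) ^ (β - 1) := by gcongr
    calc a ^ β - b ^ β ≤ a ^ (β - 1) * (a - b) :=
          rpow_sub_rpow_le_rpow_sub_one_mul_sub hβ hβ₁ hb hba
      _ ≤ 2 ^ (1 - β) * (a + b) ^ (β - 1) * (a - b) :=
          mul_le_mul_of_nonneg_right hsum (by linarith)
      _ = 2 ^ (1 - β) * ((a - b) * (a + b) ^ (β - 1)) := by ring
      _ ≤ bilipConst β * ((a - b) * (a + b) ^ (β - 1)) :=
          mul_le_mul_of_nonneg_right (two_rpow_le_bilipConst hβ (by linarith)) hS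
  · calc a ^ β - b ^ β ≤ β * (a ^ (β - 1) * (a - b)) :=
          rpow_sub_rpow_le_mul_rpow_sub_one_mul_sub hβ₁ ha hb
      _ ≤ β * ((a - b) * (a + b) ^ (β - 1)) := by
          rw [mul_comm (a - b)]
          gcongr
          linarith
      _ ≤ bilipConst β * ((a - b) * (a + b) ^ (β - 1)) :=
          mul_le_mul_of_nonneg_right (le_bilipConst hβ (.inr (.inl le_rfl))) hS

lemma sub_mul_rpow_le_bilipConst_mul_of_le (hβ : 0 < β) (hb : 0 ≤ b) (hba : b ≤ a) :
    (a - b) * (a + b) ^ (β - 1) ≤ bilipConst β * (a ^ β - b ^ β) := by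
  rcases (hb.trans hba).eq_or_lt with rfl | ha
  · obtain rfl : b = 0 := le_antisymm hba hb
    simp
  have hD : 0 ≤ a ^ β - b ^ β := sub_nonneg.2 (rpow_le_rpow hb hba hβ.le)
  rcases le_total β 1 with hβ₁ | hβ₁
  · have htan := mul_rpow_sub_one_mul_sub_le_rpow_sub_rpow hβ.le hβ₁ ha hb
    calc (a - b) * (a + b) ^ (β - 1) ≤ (a - b) * a ^ (β - 1) :=
          mul_le_mul_of_nonneg_left (rpow_le_rpow_of_nonpos ha (by linarith) (by linarith))
            (by linarith)
      _ ≤ β⁻¹ * (a ^ β - b ^ β) := by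
          rw [le_inv_mul_iff₀ hβ]
          linarith
      _ ≤ bilipConst β * (a ^ β - b ^ β) :=
          mul_le_mul_of_nonneg_right (le_bilipConst hβ (.inr (.inr le_rfl))) hD
  · calc (a - b) * (a + b) ^ (β - 1) ≤ (a - b) * (2 ^ (β - 1) * a ^ (β - 1)) := by
          rw [← mul_rpow zero_le_two ha.le]
          gcongr
          linarith
      _ = 2 ^ (β - 1) * (a ^ (β - 1) * (a - b)) := by ring
      _ ≤ 2 ^ (β - 1) * (a ^ β - b ^ β) := by
          gcongr
          exact rpow_sub_one_mul_sub_le_rpow_sub_rpow hβ₁ hb hba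
      _ ≤ bilipConst β * (a ^ β - b ^ β) :=
          mul_le_mul_of_nonneg_right (two_rpow_le_bilipConst hβ (by linarith)) hD

lemma abs_rpow_sub_rpow_le_bilipConst_mul (hβ : 0 < β) (ha : 0 ≤ a) (hb : 0 ≤ b) :
    |a ^ β - b ^ β| ≤ bilipConst β * (|a - b| * (a + b) ^ (β - 1)) := by
  wlog hba : b ≤ a generalizing a b
  · simpa only [abs_sub_comm, add_comm] using this hb ha (le_of_not_ge hba)
  rw [abs_of_nonneg (sub_nonneg.2 hba), abs_of_nonneg (sub_nonneg.2 (rpow_le_rpow hb hba hβ.le))]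
  exact rpow_sub_rpow_le_bilipConst_mul_of_le hβ hb hba

lemma abs_sub_mul_rpow_le_bilipConst_mul (hβ : 0 < β) (ha : 0 ≤ a) (hb : 0 ≤ b) :
    |a - b| * (a + b) ^ (β - 1) ≤ bilipConst β * |a ^ β - b ^ β| := by
  wlog hba : b ≤ a generalizing a b
  · simpa only [abs_sub_comm, add_comm] using this hb ha (le_of_not_ge hba)
  rw [abs_of_nonneg (sub_nonneg.2 hba), abs_of_nonneg (sub_nonneg.2 (rpow_le_rpow hb hba hβ.le))]
  exact sub_mul_rpow_le_bilipConst_mul_of_le hβ hb hba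

lemma rpow_add_rpow_le_bilipConst_mul (hβ : 0 < β) (ha : 0 ≤ a) (hb : 0 ≤ b) :
    a ^ β + b ^ β ≤ bilipConst β * (a + b) ^ β := by
  have h2 : (2 : ℝ) ≤ bilipConst β := by
    simpa using two_rpow_le_bilipConst (e := 1) hβ (by linarith)
  have hsum : 0 ≤ (a + b) ^ β := by positivity
  have : a ^ β ≤ (a + b) ^ β := rpow_le_rpow ha (by linarith) hβ.le
  have : b ^ β ≤ (a + b) ^ β := rpow_le_rpow hb (by linarith) hβ.le
  nlinarith

lemma add_rpow_le_bilipConst_mul (hβ : 0 < β) (ha : 0 ≤ a) (hb : 0 ≤ b) :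
    (a + b) ^ β ≤ bilipConst β * (a ^ β + b ^ β) := by
  wlog hba : b ≤ a generalizing a b
  · simpa only [add_comm] using this hb ha (le_of_not_ge hba)
  calc (a + b) ^ β ≤ (2 * a) ^ β := rpow_le_rpow (by positivity) (by linarith) hβ.le
    _ = 2 ^ β * a ^ β := mul_rpow zero_le_two ha
    _ ≤ bilipConst β * (a ^ β + b ^ β) :=
        mul_le_mul (two_rpow_le_bilipConst hβ (by linarith))
          (le_add_of_nonneg_right (by positivity)) (by positivity) (bilipConst_pos hβ).le

end Scalar

lemma add_mul_le_add_mul_of_abs_le {f₀ f₁ g₀ g₁ r x : ℝ} (hx : |x| ≤ r)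
    (hr : f₀ + f₁ * r ≤ g₀ + g₁ * r) (hl : f₀ - f₁ * r ≤ g₀ - g₁ * r) :
    f₀ + f₁ * x ≤ g₀ + g₁ * x := by
  obtain ⟨hx₁, hx₂⟩ := abs_le.1 hx
  rcases le_total f₁ g₁ with h | h <;> nlinarith

section InnerProductSpace

open scoped InnerProductSpace

variable {E : Type*} [NormedAddCommGroup E] [InnerProductSpace ℝ E] {β : ℝ}

lemma norm_rpow_smul_sub_rpow_smul_sq (hβ : β ≠ 0) (x y : E) :
    ‖‖x‖ ^ (β - 1) • x - ‖y‖ ^ (β - 1) • y‖ ^ 2 =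
      (‖x‖ ^ β) ^ 2 + (‖y‖ ^ β) ^ 2 - 2 * (‖x‖ ^ (β - 1) * ‖y‖ ^ (β - 1)) * ⟪x, y⟫_ℝ := by
  rw [norm_sub_sq_real, real_inner_smul_left, real_inner_smul_right, norm_smul, norm_smul,
    norm_of_nonneg (by positivity), norm_of_nonneg (by positivity),
    ← rpow_sub_one_mul_self hβ (norm_nonneg x), ← rpow_sub_one_mul_self hβ (norm_nonneg y)]
  ring

lemma norm_rpow_smul_sub_rpow_smul_le_bilipConst_mul (hβ : 0 < β) (x y : E) :
    ‖‖x‖ ^ (β - 1) • x - ‖y‖ ^ (β - 1) • y‖ ≤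
      bilipConst β * (‖x - y‖ * (‖x‖ + ‖y‖) ^ (β - 1)) := by
  set a := ‖x‖
  set b := ‖y‖
  set K := bilipConst β
  set S := (a + b) ^ (β - 1)
  have ha : 0 ≤ a := norm_nonneg x
  have hb : 0 ≤ b := norm_nonneg y
  have hprod : a ^ (β - 1) * b ^ (β - 1) * (a * b) = a ^ β * b ^ β := by
    rw [← rpow_sub_one_mul_self hβ.ne' ha, ← rpow_sub_one_mul_self hβ.ne' hb]
    ring
  have hdiff : (a ^ β - b ^ β) ^ 2 ≤ K ^ 2 * ((a - b) ^ 2 * S ^ 2) := by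
    have := pow_le_pow_left₀ (abs_nonneg _) (abs_rpow_sub_rpow_le_bilipConst_mul hβ ha hb) 2
    rw [mul_pow, mul_pow, sq_abs, sq_abs] at this
    linear_combination this
  have hadd : (a ^ β + b ^ β) ^ 2 ≤ K ^ 2 * ((a + b) ^ 2 * S ^ 2) := by
    have := pow_le_pow_left₀ (by positivity) (rpow_add_rpow_le_bilipConst_mul hβ ha hb) 2
    rw [← rpow_sub_one_mul_self hβ.ne' (add_nonneg ha hb)] at this
    linear_combination this
  have key : (a ^ β) ^ 2 + (b ^ β) ^ 2 + -2 * (a ^ (β - 1) * b ^ (β - 1)) * ⟪x, y⟫_ℝ ≤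
      K ^ 2 * ((a ^ 2 + b ^ 2) * S ^ 2) + -2 * K ^ 2 * S ^ 2 * ⟪x, y⟫_ℝ :=
    add_mul_le_add_mul_of_abs_le (abs_real_inner_le_norm x y)
      (by linear_combination hdiff - 2 * hprod) (by linear_combination hadd + 2 * hprod)
  have hS : 0 ≤ ‖x - y‖ * S := mul_nonneg (norm_nonneg _) (rpow_nonneg (add_nonneg ha hb) _)
  rw [← sq_le_sq₀ (norm_nonneg _) (mul_nonneg (bilipConst_pos hβ).le hS), mul_pow, mul_pow,
    norm_rpow_smul_sub_rpow_smul_sq hβ.ne', norm_sub_sq_real]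
  linear_combination key

lemma norm_sub_mul_rpow_le_bilipConst_mul (hβ : 0 < β) (x y : E) :
    ‖x - y‖ * (‖x‖ + ‖y‖) ^ (β - 1) ≤
      bilipConst β * ‖‖x‖ ^ (β - 1) • x - ‖y‖ ^ (β - 1) • y‖ := by
  set a := ‖x‖
  set b := ‖y‖
  set K := bilipConst β
  set S := (a + b) ^ (β - 1)
  have ha : 0 ≤ a := norm_nonneg x
  have hb : 0 ≤ b := norm_nonneg y
  have hprod : a ^ (β - 1) * b ^ (β - 1) * (a * b) = a ^ β * b ^ β := by
    rw [← rpow_sub_one_mul_self hβ.ne' ha, ← rpow_sub_one_mul_self hβ.ne' hb]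
    ring
  have hdiff : (a - b) ^ 2 * S ^ 2 ≤ K ^ 2 * (a ^ β - b ^ β) ^ 2 := by
    have := pow_le_pow_left₀ (by positivity) (abs_sub_mul_rpow_le_bilipConst_mul hβ ha hb) 2
    rw [mul_pow, mul_pow, sq_abs, sq_abs] at this
    linear_combination this
  have hadd : (a + b) ^ 2 * S ^ 2 ≤ K ^ 2 * (a ^ β + b ^ β) ^ 2 := by
    have := pow_le_pow_left₀ (by positivity) (add_rpow_le_bilipConst_mul hβ ha hb) 2
    rw [← rpow_sub_one_mul_self hβ.ne' (add_nonneg ha hb)] at this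
    linear_combination this
  have key : (a ^ 2 + b ^ 2) * S ^ 2 + -2 * S ^ 2 * ⟪x, y⟫_ℝ ≤
      K ^ 2 * ((a ^ β) ^ 2 + (b ^ β) ^ 2) + -2 * K ^ 2 * (a ^ (β - 1) * b ^ (β - 1)) * ⟪x, y⟫_ℝ :=
    add_mul_le_add_mul_of_abs_le (abs_real_inner_le_norm x y)
      (by linear_combination hdiff + 2 * K ^ 2 * hprod)
      (by linear_combination hadd - 2 * K ^ 2 * hprod)
  have hS : 0 ≤ ‖x - y‖ * S := mul_nonneg (norm_nonneg _) (rpow_nonneg (add_nonneg ha hb) _)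
  rw [← sq_le_sq₀ hS (mul_nonneg (bilipConst_pos hβ).le (norm_nonneg _)), mul_pow, mul_pow,
    norm_rpow_smul_sub_rpow_smul_sq hβ.ne', norm_sub_sq_real]
  linear_combination key

end InnerProductSpace

theorem V_map_bilipschitz (m : ℕ) (p : ℝ) (hp : 1 < p) :
    ∃ cV : ℝ, 0 < cV ∧ ∀ z₁ z₂ : EuclideanSpace ℝ (Fin m), (z₁ ≠ 0 ∨ z₂ ≠ 0) →
      (1 / cV) * ‖z₁ - z₂‖ ≤
        ‖(‖z₁‖ ^ ((p - 2) / 2)) • z₁ - (‖z₂‖ ^ ((p - 2) / 2)) • z₂‖ /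
          (‖z₁‖ + ‖z₂‖) ^ ((p - 2) / 2) ∧
      ‖(‖z₁‖ ^ ((p - 2) / 2)) • z₁ - (‖z₂‖ ^ ((p - 2) / 2)) • z₂‖ /
          (‖z₁‖ + ‖z₂‖) ^ ((p - 2) / 2) ≤ cV * ‖z₁ - z₂‖ := by
  have hβ : 0 < p / 2 := by linarith
  have hK := bilipConst_pos hβ
  refine ⟨bilipConst (p / 2), hK, fun z₁ z₂ hz => ?_⟩
  have hnorm : 0 < ‖z₁‖ + ‖z₂‖ := by
    rcases hz with hz | hz
    · exact add_pos_of_pos_of_nonneg (norm_pos_iff.2 hz) (norm_nonneg _)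
    · exact add_pos_of_nonneg_of_pos (norm_nonneg _) (norm_pos_iff.2 hz)
  rw [show (p - 2) / 2 = p / 2 - 1 by ring, le_div_iff₀ (rpow_pos_of_pos hnorm _),
    div_le_iff₀ (rpow_pos_of_pos hnorm _), one_div, mul_assoc, inv_mul_le_iff₀ hK, mul_assoc]
  exact ⟨norm_sub_mul_rpow_le_bilipConst_mul hβ z₁ z₂,
    norm_rpow_smul_sub_rpow_smul_le_bilipConst_mul hβ z₁ z₂⟩
end

section
/- For m ∈ ℕ and 1 < p ≤ 2, with V_p(z) = |z|^((p−2)/2)·z, there exists a constant c = c(m,p) > 0 such that for all z₁, z₂ ∈ ℝ^m, |z₁ − z₂| ≤ c·|V_p(z₁) − V_p(z₂)|^(2/p) + c·|V_p(z₁) − V_p(z₂)|·|z₂|^((2−p)/2). -/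
/-!
With `s = p / 2` we have `V z = |z|^(s-1) z`, so `|V z| = |z|^s` and `z = |z|^(1-s) V z`, whence
`z₁ - z₂ = |z₂|^(1-s) (V z₁ - V z₂) + (|z₁|^(1-s) - |z₂|^(1-s)) V z₁`.
Put `a = |V z₁|`, `b = |V z₂|`, `W = |V z₁ - V z₂| ≥ |a - b|` and `θ = (2 - p) / p ∈ [0, 1]`, so that
`|z|^(1-s) = |V z|^θ`. Concavity of `t ↦ t^θ` gives `|a^θ - b^θ| · max(a, b)^(1-θ) ≤ |a - b|`,
and subadditivity gives `max(a, b)^θ ≤ (b + W)^θ ≤ b^θ + W^θ`; hence the second term is at most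
`W b^θ + W^(1+θ)`, and `1 + θ = 2 / p`. This yields the estimate with `c = 2`.
-/

open Real

section RpowDifference

variable {a b θ : ℝ}

lemma rpow_mul_rpow_one_sub (ha : 0 ≤ a) : a ^ θ * a ^ (1 - θ) = a := by
  rw [← rpow_add' ha (by norm_num), add_sub_cancel, rpow_one]

lemma abs_rpow_sub_rpow_mul_max_rpow_le (ha : 0 ≤ a) (hb : 0 ≤ b) (hθ₀ : 0 ≤ θ) (hθ₁ : θ ≤ 1) :
    |a ^ θ - b ^ θ| * max a b ^ (1 - θ) ≤ |a - b| := by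
  wlog hba : b ≤ a generalizing a b
  · rw [abs_sub_comm, max_comm, abs_sub_comm a]
    exact this hb ha (le_of_not_ge hba)
  rw [max_eq_left hba, abs_of_nonneg (sub_nonneg.2 (rpow_le_rpow hb hba hθ₀)),
    abs_of_nonneg (sub_nonneg.2 hba)]
  calc (a ^ θ - b ^ θ) * a ^ (1 - θ) = a - b ^ θ * a ^ (1 - θ) := by
        rw [sub_mul, rpow_mul_rpow_one_sub ha]
    _ ≤ a - b ^ θ * b ^ (1 - θ) := by gcongr
    _ = a - b := by rw [rpow_mul_rpow_one_sub hb]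

lemma abs_rpow_sub_rpow_mul_le {w : ℝ} (ha : 0 ≤ a) (hb : 0 ≤ b) (hθ₀ : 0 ≤ θ) (hθ₁ : θ ≤ 1)
    (hw : |a - b| ≤ w) : |a ^ θ - b ^ θ| * a ≤ w * (b ^ θ + w ^ θ) := by
  have hw₀ : 0 ≤ w := (abs_nonneg _).trans hw
  set M := max a b
  have hM : 0 ≤ M := le_max_of_le_left ha
  calc |a ^ θ - b ^ θ| * a ≤ |a ^ θ - b ^ θ| * M := by gcongr; exact le_max_left a b
    _ = |a ^ θ - b ^ θ| * M ^ (1 - θ) * M ^ θ := by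
        rw [mul_assoc, mul_comm (M ^ (1 - θ)), rpow_mul_rpow_one_sub hM]
    _ ≤ |a - b| * (b + |a - b|) ^ θ := by
        gcongr
        · exact abs_rpow_sub_rpow_mul_max_rpow_le ha hb hθ₀ hθ₁
        · exact max_le (by linarith [le_abs_self (a - b)]) (le_add_of_nonneg_right (abs_nonneg _))
    _ ≤ |a - b| * (b ^ θ + |a - b| ^ θ) := by
        gcongr
        exact rpow_add_le_add_rpow hb (abs_nonneg _) hθ₀ hθ₁
    _ ≤ w * (b ^ θ + w ^ θ) := by gcongr

end RpowDifference

section PowerField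

variable {E : Type*} [NormedAddCommGroup E] [NormedSpace ℝ E] {p : ℝ}

noncomputable def V (p : ℝ) (z : E) : E := ‖z‖ ^ ((p - 2) / 2) • z

lemma norm_V (hp : 0 < p) (z : E) : ‖V p z‖ = ‖z‖ ^ (p / 2) := by
  rw [V, norm_smul, norm_of_nonneg (rpow_nonneg (norm_nonneg z) _),
    ← rpow_add_one' (norm_nonneg z) (by linarith)]
  ring_nf

lemma rpow_smul_V (p : ℝ) (z : E) : ‖z‖ ^ ((2 - p) / 2) • V p z = z := by
  rcases eq_or_ne z 0 with rfl | hz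
  · simp [V]
  rw [V, smul_smul, ← rpow_add (norm_pos_iff.2 hz), show (2 - p) / 2 + (p - 2) / 2 = 0 by ring,
    rpow_zero, one_smul]

lemma norm_sub_le_of_V (hp : 0 < p) (z₁ z₂ : E) :
    ‖z₁ - z₂‖ ≤ ‖z₂‖ ^ ((2 - p) / 2) * ‖V p z₁ - V p z₂‖ +
      |‖z₁‖ ^ ((2 - p) / 2) - ‖z₂‖ ^ ((2 - p) / 2)| * ‖z₁‖ ^ (p / 2) := by
  have h : z₁ - z₂ = ‖z₂‖ ^ ((2 - p) / 2) • (V p z₁ - V p z₂) +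
      (‖z₁‖ ^ ((2 - p) / 2) - ‖z₂‖ ^ ((2 - p) / 2)) • V p z₁ := by
    rw [smul_sub, sub_smul, rpow_smul_V, rpow_smul_V]
    abel
  calc ‖z₁ - z₂‖ ≤ _ := h ▸ norm_add_le _ _
    _ = _ := by
      rw [norm_smul, norm_smul, norm_V hp, norm_of_nonneg (rpow_nonneg (norm_nonneg _) _),
        Real.norm_eq_abs]

end PowerField

theorem V_estimate_p_le_two (m : ℕ) (p : ℝ) (hp₁ : 1 < p) (hp₂ : p ≤ 2) :
    ∃ c : ℝ, 0 < c ∧ ∀ z₁ z₂ : EuclideanSpace ℝ (Fin m),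
      ‖z₁ - z₂‖ ≤
        c * ‖(‖z₁‖ ^ ((p - 2) / 2)) • z₁ - (‖z₂‖ ^ ((p - 2) / 2)) • z₂‖ ^ (2 / p) +
        c * ‖(‖z₁‖ ^ ((p - 2) / 2)) • z₁ - (‖z₂‖ ^ ((p - 2) / 2)) • z₂‖ *
          ‖z₂‖ ^ ((2 - p) / 2) := by
  have hp : 0 < p := by linarith
  set θ := (2 - p) / p with hθ
  have hθ₀ : 0 ≤ θ := div_nonneg (by linarith) hp.le
  have hθ₁ : θ ≤ 1 := (div_le_one hp).2 (by linarith)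
  have h_exp (z : EuclideanSpace ℝ (Fin m)) : ‖z‖ ^ ((2 - p) / 2) = (‖z‖ ^ (p / 2)) ^ θ := by
    rw [← rpow_mul (norm_nonneg z), hθ]; field_simp
  refine ⟨2, two_pos, fun z₁ z₂ => ?_⟩
  change _ ≤ 2 * ‖V p z₁ - V p z₂‖ ^ (2 / p) + 2 * ‖V p z₁ - V p z₂‖ * _
  set W := ‖V p z₁ - V p z₂‖
  have hW : |‖z₁‖ ^ (p / 2) - ‖z₂‖ ^ (p / 2)| ≤ W :=
    norm_V hp z₁ ▸ norm_V hp z₂ ▸ abs_norm_sub_norm_le _ _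
  have hW_pow : W ^ (2 / p) = W * W ^ θ := by
    rw [← rpow_one_add' (norm_nonneg _) (by positivity)]; congr 1; rw [hθ]; field_simp; ring
  calc ‖z₁ - z₂‖ ≤ ‖z₂‖ ^ ((2 - p) / 2) * W +
        |‖z₁‖ ^ ((2 - p) / 2) - ‖z₂‖ ^ ((2 - p) / 2)| * ‖z₁‖ ^ (p / 2) :=
        norm_sub_le_of_V hp z₁ z₂
    _ ≤ ‖z₂‖ ^ ((2 - p) / 2) * W + W * (‖z₂‖ ^ ((2 - p) / 2) + W ^ θ) := by
        rw [h_exp z₁, h_exp z₂]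
        exact add_le_add_right (abs_rpow_sub_rpow_mul_le (by positivity) (by positivity) hθ₀ hθ₁ hW) _
    _ ≤ 2 * W ^ (2 / p) + 2 * W * ‖z₂‖ ^ ((2 - p) / 2) := by
        have : 0 ≤ W * W ^ θ := by positivity
        rw [hW_pow]
        linarith
end
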